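/- arXiv:1306.0729 — 2 statements merged into one kernel-verified Lean document; each statement's English description precedes it below -/
import Mathlib

section
/- If a finite set M of nonnegative matrices with no zero rows or columns is irreducible (no common nontrivial block-triangular structure), then for any i, j there exists a product C of matrices from M with C_{ij} > 0. -/
/-! Fix `i` and let `S` be the set of indices `k` with `0 < C i k` for some nonempty product `C`
of matrices from `M`. It is nonempty because rows are nonzero, and by nonnegativity no matrix of
`M` has a nonzero entry from `S` to its complement. So if `S` were not everything, `S` and its
complement would be a common block-triangular structure. -/

open Finset

namespace Matrix

variable {ι R : Type*} [Fintype ι] [DecidableEq ι]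

lemma eq_univ_of_irreducible [Zero R] {M : Set (Matrix ι ι R)}
    (hirr : ¬ ∃ N₁ N₂ : Finset ι, N₁.Nonempty ∧ N₂.Nonempty ∧ Disjoint N₁ N₂ ∧
      N₁ ∪ N₂ = univ ∧ ∀ A ∈ M, ∀ i ∈ N₁, ∀ j ∈ N₂, A i j = 0)
    {S : Finset ι} (hS : S.Nonempty) (hclosed : ∀ A ∈ M, ∀ p ∈ S, ∀ q, A p q ≠ 0 → q ∈ S) :
    S = univ := by
  by_contra hne
  refine hirr ⟨S, Sᶜ, hS, (compl_ne_univ_iff_nonempty _).mp (by rwa [compl_compl]),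
    disjoint_compl_right, union_compl S, fun A hA p hp q hq => ?_⟩
  by_contra hApq
  exact mem_compl.mp hq (hclosed A hA p hp q hApq)

variable [Semiring R] [PartialOrder R]

lemma list_prod_apply_nonneg [IsOrderedRing R] {l : List (Matrix ι ι R)}
    (hl : ∀ A ∈ l, ∀ i j, 0 ≤ A i j) (i j : ι) : 0 ≤ l.prod i j := by
  induction l generalizing i with
  | nil => by_cases h : i = j <;> simp [h]
  | cons A t ih =>
    rw [List.prod_cons, mul_apply]
    exact sum_nonneg fun k _ =>
      mul_nonneg (hl A List.mem_cons_self i k) (ih (fun P hP => hl P (List.mem_cons_of_mem A hP)) k)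

def posReach (M : Set (Matrix ι ι R)) (i : ι) : Set ι :=
  {k | ∃ l : List (Matrix ι ι R), (∀ P ∈ l, P ∈ M) ∧ l ≠ [] ∧ 0 < l.prod i k}

lemma mem_posReach_of_pos {M : Set (Matrix ι ι R)} {A : Matrix ι ι R} (hA : A ∈ M) {i k : ι}
    (hik : 0 < A i k) : k ∈ posReach M i :=
  ⟨[A], by simpa using hA, List.cons_ne_nil A [], by simpa using hik⟩

variable [IsStrictOrderedRing R] {M : Set (Matrix ι ι R)}

lemma mem_posReach_of_mem_of_pos (hpos : ∀ A ∈ M, ∀ i j, 0 ≤ A i j) {i p q : ι}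
    (hp : p ∈ posReach M i) {A : Matrix ι ι R} (hA : A ∈ M) (hpq : 0 < A p q) :
    q ∈ posReach M i := by
  obtain ⟨l, hlM, hl, hip⟩ := hp
  have hlA : ∀ P ∈ l ++ [A], P ∈ M := by simpa [or_imp, forall_and] using ⟨hlM, hA⟩
  refine ⟨l ++ [A], hlA, by simp, ?_⟩
  rw [List.prod_append, List.prod_singleton, mul_apply]
  refine sum_pos' (fun k _ => ?_) ⟨p, mem_univ p, mul_pos hip hpq⟩
  exact mul_nonneg (list_prod_apply_nonneg (fun P hP => hpos P (hlM P hP)) i k) (hpos A hA k q)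

lemma posReach_eq_univ (hpos : ∀ A ∈ M, ∀ i j, 0 ≤ A i j)
    (hirr : ¬ ∃ N₁ N₂ : Finset ι, N₁.Nonempty ∧ N₂.Nonempty ∧ Disjoint N₁ N₂ ∧
      N₁ ∪ N₂ = univ ∧ ∀ A ∈ M, ∀ i ∈ N₁, ∀ j ∈ N₂, A i j = 0)
    {i : ι} (hi : (posReach M i).Nonempty) : posReach M i = Set.univ := by
  classical
  have hS : (posReach M i).toFinset = univ := by
    refine eq_univ_of_irreducible hirr (Set.toFinset_nonempty.mpr hi) fun A hA p hp q hpq => ?_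
    rw [Set.mem_toFinset] at hp ⊢
    exact mem_posReach_of_mem_of_pos hpos hp hA (lt_of_le_of_ne (hpos A hA p q) hpq.symm)
  simpa using hS

end Matrix

theorem stmt14_general (n : ℕ) (M : Finset (Matrix (Fin n) (Fin n) ℝ)) (hM : M.Nonempty)
    (hpos : ∀ A ∈ M, ∀ i j, 0 ≤ A i j)
    (hrow : ∀ A ∈ M, ∀ i, ∃ j, 0 < A i j)
    (hirr : ¬ ∃ N₁ N₂ : Finset (Fin n), N₁.Nonempty ∧ N₂.Nonempty ∧ Disjoint N₁ N₂ ∧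
      N₁ ∪ N₂ = Finset.univ ∧ ∀ A ∈ M, ∀ i ∈ N₁, ∀ j ∈ N₂, A i j = 0) :
    ∀ i j : Fin n, ∃ l : List (Matrix (Fin n) (Fin n) ℝ),
      (∀ P ∈ l, P ∈ M) ∧ l ≠ [] ∧ 0 < l.prod i j := by
  intro i j
  obtain ⟨A, hA⟩ := hM
  obtain ⟨k, hik⟩ := hrow A hA i
  have hreach := Matrix.posReach_eq_univ (M := (M : Set (Matrix (Fin n) (Fin n) ℝ))) hpos hirr
    ⟨k, Matrix.mem_posReach_of_pos hA hik⟩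
  exact Set.eq_univ_iff_forall.mp hreach j

theorem stmt14 (n : ℕ) (M : Finset (Matrix (Fin n) (Fin n) ℝ)) (hM : M.Nonempty)
    (hpos : ∀ A ∈ M, ∀ i j, 0 ≤ A i j)
    (hrow : ∀ A ∈ M, ∀ i, ∃ j, 0 < A i j)
    (hcol : ∀ A ∈ M, ∀ j, ∃ i, 0 < A i j)
    (hirr : ¬ ∃ N₁ N₂ : Finset (Fin n), N₁.Nonempty ∧ N₂.Nonempty ∧ Disjoint N₁ N₂ ∧
      N₁ ∪ N₂ = Finset.univ ∧ ∀ A ∈ M, ∀ i ∈ N₁, ∀ j ∈ N₂, A i j = 0) :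
    ∀ i j : Fin n, ∃ l : List (Matrix (Fin n) (Fin n) ℝ),
      (∀ P ∈ l, P ∈ M) ∧ l ≠ [] ∧ 0 < l.prod i j :=
  stmt14_general n M hM hpos hrow hirr
end

section
/- Let M be an irreducible finite set of nonnegative n×n matrices with no zero rows or columns, and let n₁ be the maximum number of positive entries in any row or column of any finite product of matrices from M. Then there exists a product A of matrices from M and a set S of size n₁ such that A_{ij} > 0 for all i, j ∈ S, and A_{ij} = 0 whenever exactly one of i, j belongs to S. -/
/-!
Work in the semigroup `Q` generated by `M`; by irreducibility every entry is positive in some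
element of `Q`. Transposing if necessary, let row `i₀` of `B ∈ Q` have a support `R` of maximal
size `n₁`. For `l ∈ R` choose `C ∈ Q` with `C l i₀ > 0`: row `l` of `C * B` is positive on `R`,
and maximality of `R` forces every row in `R` of `C * B` to be supported in `R`. Products of such
matrices give `A ∈ Q` positive on `R × R`. Since no row or column of `A` has more than `n₁`
positive entries, the rows and columns indexed by `R` vanish outside `R`.
-/

/-- Number of positive entries in row `i` of `B`. -/
noncomputable def rowCount {n : ℕ} (B : Matrix (Fin n) (Fin n) ℝ) (i : Fin n) : ℕ :=
  (Finset.univ.filter fun j => 0 < B i j).card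

/-- Number of positive entries in column `j` of `B`. -/
noncomputable def colCount {n : ℕ} (B : Matrix (Fin n) (Fin n) ℝ) (j : Fin n) : ℕ :=
  (Finset.univ.filter fun i => 0 < B i j).card

open Finset Matrix

theorem Subsemigroup.mem_closure_iff_exists_list {M : Type*} [Monoid M] {s : Set M} {x : M} :
    x ∈ closure s ↔ ∃ l : List M, l ≠ [] ∧ (∀ y ∈ l, y ∈ s) ∧ l.prod = x := by
  constructor
  · intro hx
    induction hx using closure_induction with
    | mem x hx => exact ⟨[x], List.cons_ne_nil x [], by simpa using hx, List.prod_singleton⟩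
    | mul x y _ _ ihx ihy =>
      obtain ⟨l, hl, hls, rfl⟩ := ihx
      obtain ⟨l', -, hls', rfl⟩ := ihy
      refine ⟨l ++ l', by simp [hl], fun y hy => ?_, List.prod_append⟩
      exact (List.mem_append.1 hy).elim (hls y) (hls' y)
  · rintro ⟨l, hl, hls, rfl⟩
    induction l with
    | nil => exact absurd rfl hl
    | cons a l ih =>
      have ha : a ∈ closure s := subset_closure (hls a List.mem_cons_self)
      rcases eq_or_ne l [] with rfl | hl'
      · simpa using ha
      · rw [List.prod_cons]
        exact mul_mem ha (ih hl' fun y hy => hls y (List.mem_cons_of_mem a hy))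

namespace Matrix

variable {ι κ ν : Type*}

noncomputable def rowSupport [Fintype κ] (A : Matrix ι κ ℝ) (i : ι) : Finset κ :=
  {j | 0 < A i j}

@[simp]
theorem mem_rowSupport [Fintype κ] {A : Matrix ι κ ℝ} {i : ι} {j : κ} :
    j ∈ A.rowSupport i ↔ 0 < A i j := by
  simp [rowSupport]

theorem mul_apply_pos_iff [Fintype κ] {A : Matrix ι κ ℝ} {B : Matrix κ ν ℝ}
    (hA : ∀ i k, 0 ≤ A i k) (hB : ∀ k j, 0 ≤ B k j) {i : ι} {j : ν} :
    0 < (A * B) i j ↔ ∃ k, 0 < A i k ∧ 0 < B k j := by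
  rw [mul_apply, Finset.sum_pos_iff_of_nonneg fun k _ => mul_nonneg (hA i k) (hB k j)]
  simp [mul_pos_iff, (hA i _).not_gt]

theorem rowSupport_subset_rowSupport_mul [Fintype κ] [Fintype ν] {A : Matrix ι κ ℝ}
    {B : Matrix κ ν ℝ} (hA : ∀ i k, 0 ≤ A i k) (hB : ∀ k j, 0 ≤ B k j) {i : ι} {k : κ}
    (hik : 0 < A i k) : B.rowSupport k ⊆ (A * B).rowSupport i := fun _ hj =>
  mem_rowSupport.2 <| (mul_apply_pos_iff hA hB).2 ⟨k, hik, mem_rowSupport.1 hj⟩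

theorem apply_eq_zero_of_card_rowSupport_le [Fintype κ] {A : Matrix ι κ ℝ}
    (hA : ∀ i j, 0 ≤ A i j) {T : Finset κ} {i : ι} (hT : ∀ j ∈ T, 0 < A i j)
    (hcard : #(A.rowSupport i) ≤ #T) {j : κ} (hj : j ∉ T) : A i j = 0 := by
  have hrow : T = A.rowSupport i :=
    eq_of_subset_of_card_le (fun k hk => mem_rowSupport.2 (hT k hk)) hcard
  exact (hA i j).antisymm' <| not_lt.1 fun hij => hj (hrow ▸ mem_rowSupport.2 hij)

theorem apply_eq_zero_of_xor [Fintype ι] {A : Matrix ι ι ℝ} (hA : ∀ i j, 0 ≤ A i j)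
    {T : Finset ι} (hT : ∀ i ∈ T, ∀ j ∈ T, 0 < A i j) (hrow : ∀ i, #(A.rowSupport i) ≤ #T)
    (hcol : ∀ j, #(Aᵀ.rowSupport j) ≤ #T) {i j : ι} (hij : Xor (i ∈ T) (j ∈ T)) : A i j = 0 := by
  rcases hij with ⟨hi, hj⟩ | ⟨hj, hi⟩
  · exact apply_eq_zero_of_card_rowSupport_le hA (hT i hi) (hrow i) hj
  · exact apply_eq_zero_of_card_rowSupport_le (A := Aᵀ) (fun i j => hA j i)
      (fun k hk => hT k hk j hj) (hcol j) hi

def IsRowClosed [Fintype ι] (D : Matrix ι ι ℝ) (R : Finset ι) : Prop :=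
  ∀ k ∈ R, D.rowSupport k ⊆ R

theorem IsRowClosed.mul [Fintype ι] {D E : Matrix ι ι ℝ} {R : Finset ι}
    (hD₀ : ∀ i j, 0 ≤ D i j) (hE₀ : ∀ i j, 0 ≤ E i j) (hD : D.IsRowClosed R)
    (hE : E.IsRowClosed R) : (D * E).IsRowClosed R := by
  intro k hk j hj
  obtain ⟨s, hks, hsj⟩ := (mul_apply_pos_iff hD₀ hE₀).1 (mem_rowSupport.1 hj)
  exact hE s (hD k hk (mem_rowSupport.2 hks)) (mem_rowSupport.2 hsj)

def transposeSubsemigroup [Fintype ι] {α : Type*} [CommSemiring α]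
    (S : Subsemigroup (Matrix ι ι α)) : Subsemigroup (Matrix ι ι α) where
  carrier := {A | Aᵀ ∈ S}
  mul_mem' {A B} hA hB := by
    simpa only [Set.mem_ofPred_eq, transpose_mul] using S.mul_mem hB hA

theorem mem_transposeSubsemigroup [Fintype ι] {α : Type*} [CommSemiring α]
    {S : Subsemigroup (Matrix ι ι α)} {A : Matrix ι ι α} :
    A ∈ transposeSubsemigroup S ↔ Aᵀ ∈ S :=
  Iff.rfl

end Matrix

section Closure

variable {ι : Type*} [Fintype ι] {M : Set (Matrix ι ι ℝ)}

theorem nonneg_of_mem_closure (hM₀ : ∀ A ∈ M, ∀ i j, 0 ≤ A i j) {A : Matrix ι ι ℝ}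
    (hA : A ∈ Subsemigroup.closure M) (i j : ι) : 0 ≤ A i j := by
  induction hA using Subsemigroup.closure_induction generalizing i j with
  | mem A hA => exact hM₀ A hA i j
  | mul A B _ _ ihA ihB =>
    exact Finset.sum_nonneg fun k _ => mul_nonneg (ihA i k) (ihB k j)

theorem exists_row_pos_of_mem_closure (hM₀ : ∀ A ∈ M, ∀ i j, 0 ≤ A i j)
    (hrow : ∀ A ∈ M, ∀ i, ∃ j, 0 < A i j) {A : Matrix ι ι ℝ} (hA : A ∈ Subsemigroup.closure M)
    (i : ι) : ∃ j, 0 < A i j := by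
  induction hA using Subsemigroup.closure_induction generalizing i with
  | mem A hA => exact hrow A hA i
  | mul A B hA hB ihA ihB =>
    obtain ⟨k, hik⟩ := ihA i
    obtain ⟨j, hkj⟩ := ihB k
    exact ⟨j, (mul_apply_pos_iff (nonneg_of_mem_closure hM₀ hA)
      (nonneg_of_mem_closure hM₀ hB)).2 ⟨k, hik, hkj⟩⟩

theorem exists_col_pos_of_mem_closure (hM₀ : ∀ A ∈ M, ∀ i j, 0 ≤ A i j)
    (hcol : ∀ A ∈ M, ∀ j, ∃ i, 0 < A i j) {A : Matrix ι ι ℝ} (hA : A ∈ Subsemigroup.closure M)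
    (j : ι) : ∃ i, 0 < A i j := by
  induction hA using Subsemigroup.closure_induction generalizing j with
  | mem A hA => exact hcol A hA j
  | mul A B hA hB ihA ihB =>
    obtain ⟨k, hkj⟩ := ihB j
    obtain ⟨i, hik⟩ := ihA k
    exact ⟨i, (mul_apply_pos_iff (nonneg_of_mem_closure hM₀ hA)
      (nonneg_of_mem_closure hM₀ hB)).2 ⟨k, hik, hkj⟩⟩

/-- Irreducibility makes every entry positive in some product: otherwise the indices reachable
from `i` and the remaining ones form a partition that every matrix of `M` respects. -/
theorem exists_mem_closure_apply_pos [DecidableEq ι] (hM : M.Nonempty)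
    (hM₀ : ∀ A ∈ M, ∀ i j, 0 ≤ A i j) (hrow : ∀ A ∈ M, ∀ i, ∃ j, 0 < A i j)
    (hirr : ¬ ∃ N₁ N₂ : Finset ι, N₁.Nonempty ∧ N₂.Nonempty ∧ Disjoint N₁ N₂ ∧
      N₁ ∪ N₂ = Finset.univ ∧ ∀ A ∈ M, ∀ i ∈ N₁, ∀ j ∈ N₂, A i j = 0)
    (i j : ι) : ∃ A ∈ Subsemigroup.closure M, 0 < A i j := by
  classical
  let T : Finset ι := {k | ∃ A ∈ Subsemigroup.closure M, 0 < A i k}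
  by_contra hj
  have hT : T.Nonempty := by
    obtain ⟨A, hA⟩ := hM
    obtain ⟨k, hk⟩ := hrow A hA i
    exact ⟨k, by simpa [T] using ⟨A, Subsemigroup.subset_closure hA, hk⟩⟩
  refine hirr ⟨T, Tᶜ, hT, ⟨j, by simpa [T] using hj⟩, disjoint_compl_right, union_compl T,
    fun A hA a ha b hb => ?_⟩
  obtain ⟨C, hC, hia⟩ : ∃ C ∈ Subsemigroup.closure M, 0 < C i a := by simpa [T] using ha
  refine (hM₀ A hA a b).antisymm' <| not_lt.1 fun hab => mem_compl.1 hb ?_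
  simpa [T] using ⟨C * A, mul_mem hC (Subsemigroup.subset_closure hA), (mul_apply_pos_iff
    (nonneg_of_mem_closure hM₀ hC) (hM₀ A hA)).2 ⟨a, hia, hab⟩⟩

end Closure

section MaximalRow

variable {ι : Type*} [Fintype ι] {S : Subsemigroup (Matrix ι ι ℝ)} {B : Matrix ι ι ℝ} {i₀ : ι}

/-- Row `i₀` of `B * D` contains row `l` of `D`, hence `R`, hence equals `R` by maximality; and it
contains row `k` of `D` for every `k ∈ R`. -/
theorem isRowClosed_of_rowSupport_subset (hS₀ : ∀ A ∈ S, ∀ i j, 0 ≤ A i j) (hB : B ∈ S)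
    (hmax : ∀ A ∈ S, ∀ i, #(A.rowSupport i) ≤ #(B.rowSupport i₀)) {D : Matrix ι ι ℝ}
    (hD : D ∈ S) {l : ι} (hl : l ∈ B.rowSupport i₀) (hDl : B.rowSupport i₀ ⊆ D.rowSupport l) :
    D.IsRowClosed (B.rowSupport i₀) := by
  have hBD : (B * D).rowSupport i₀ = B.rowSupport i₀ :=
    (eq_of_subset_of_card_le (hDl.trans (rowSupport_subset_rowSupport_mul (hS₀ B hB)
      (hS₀ D hD) (mem_rowSupport.1 hl))) (hmax _ (S.mul_mem hB hD) i₀)).symm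
  intro k hk
  exact hBD ▸ rowSupport_subset_rowSupport_mul (hS₀ B hB) (hS₀ D hD) (mem_rowSupport.1 hk)

theorem exists_isRowClosed_rowSupport_subset (hS₀ : ∀ A ∈ S, ∀ i j, 0 ≤ A i j)
    (hreach : ∀ i j, ∃ A ∈ S, 0 < A i j) (hB : B ∈ S)
    (hmax : ∀ A ∈ S, ∀ i, #(A.rowSupport i) ≤ #(B.rowSupport i₀)) {l : ι}
    (hl : l ∈ B.rowSupport i₀) :
    ∃ D ∈ S, B.rowSupport i₀ ⊆ D.rowSupport l ∧ D.IsRowClosed (B.rowSupport i₀) := by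
  obtain ⟨C, hC, hli₀⟩ := hreach l i₀
  have hCB : B.rowSupport i₀ ⊆ (C * B).rowSupport l :=
    rowSupport_subset_rowSupport_mul (hS₀ C hC) (hS₀ B hB) hli₀
  exact ⟨C * B, S.mul_mem hC hB, hCB,
    isRowClosed_of_rowSupport_subset hS₀ hB hmax (S.mul_mem hC hB) hl hCB⟩

/-- If `W` is closed on `R` and its rows in `F` are positive on `R`, pick `m ∈ R` with
`W a m > 0`; then `W * D` with `D` positive on `R` in row `m` has its rows in `insert a F`
positive on `R`. -/
theorem exists_forall_apply_pos_of_rowSupport_maximal (hS₀ : ∀ A ∈ S, ∀ i j, 0 ≤ A i j)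
    (hrow : ∀ A ∈ S, ∀ i, ∃ j, 0 < A i j) (hreach : ∀ i j, ∃ A ∈ S, 0 < A i j) (hB : B ∈ S)
    (hmax : ∀ A ∈ S, ∀ i, #(A.rowSupport i) ≤ #(B.rowSupport i₀)) :
    ∃ A ∈ S, ∀ i ∈ B.rowSupport i₀, ∀ j ∈ B.rowSupport i₀, 0 < A i j := by
  classical
  set R := B.rowSupport i₀
  choose D hDS hDl hDR using fun l (hl : l ∈ R) =>
    exists_isRowClosed_rowSupport_subset hS₀ hreach hB hmax hl
  obtain hR | ⟨l₀, hl₀⟩ := R.eq_empty_or_nonempty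
  · exact ⟨B, hB, by simp [hR]⟩
  suffices ∀ F ⊆ R, ∃ W ∈ S, W.IsRowClosed R ∧ ∀ k ∈ F, R ⊆ W.rowSupport k by
    obtain ⟨W, hW, -, hWR⟩ := this R subset_rfl
    exact ⟨W, hW, fun i hi j hj => mem_rowSupport.1 (hWR i hi hj)⟩
  intro F
  induction F using Finset.induction_on with
  | empty => exact fun _ => ⟨D l₀ hl₀, hDS l₀ hl₀, hDR l₀ hl₀, by simp⟩
  | insert a F _ ih =>
    intro hF
    rw [insert_subset_iff] at hF
    obtain ⟨W, hW, hWR, hWF⟩ := ih hF.2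
    obtain ⟨m, ham⟩ := hrow W hW a
    have hm : m ∈ R := hWR a hF.1 (mem_rowSupport.2 ham)
    have hkm : ∀ k ∈ insert a F, 0 < W k m := by
      rintro k hk
      rcases mem_insert.1 hk with rfl | hk
      · exact ham
      · exact mem_rowSupport.1 (hWF k hk hm)
    refine ⟨W * D m hm, S.mul_mem hW (hDS m hm),
      hWR.mul (hS₀ W hW) (hS₀ _ (hDS m hm)) (hDR m hm), fun k hk => ?_⟩
    exact (hDl m hm).trans
      (rowSupport_subset_rowSupport_mul (hS₀ W hW) (hS₀ _ (hDS m hm)) (hkm k hk))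

theorem exists_forall_apply_pos_of_colSupport_maximal (hS₀ : ∀ A ∈ S, ∀ i j, 0 ≤ A i j)
    (hcol : ∀ A ∈ S, ∀ j, ∃ i, 0 < A i j) (hreach : ∀ i j, ∃ A ∈ S, 0 < A i j) (hB : B ∈ S)
    (hmax : ∀ A ∈ S, ∀ j, #(Aᵀ.rowSupport j) ≤ #(Bᵀ.rowSupport i₀)) :
    ∃ A ∈ S, ∀ i ∈ Bᵀ.rowSupport i₀, ∀ j ∈ Bᵀ.rowSupport i₀, 0 < A i j := by
  have hreachT : ∀ i j, ∃ A ∈ transposeSubsemigroup S, 0 < A i j := fun i j =>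
    let ⟨A, hA, hji⟩ := hreach j i
    ⟨Aᵀ, by rwa [mem_transposeSubsemigroup, transpose_transpose], hji⟩
  obtain ⟨A, hA, hApos⟩ := exists_forall_apply_pos_of_rowSupport_maximal
    (S := transposeSubsemigroup S) (fun A hA i j => hS₀ _ hA j i) (fun A hA => hcol _ hA)
    hreachT (by rwa [mem_transposeSubsemigroup, transpose_transpose])
    (fun A hA j => transpose_transpose A ▸ hmax _ hA j)
  exact ⟨Aᵀ, hA, fun i hi j hj => hApos j hj i hi⟩

end MaximalRow

theorem stmt15 (n : ℕ) (M : Finset (Matrix (Fin n) (Fin n) ℝ)) (hM : M.Nonempty)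
    (hpos : ∀ A ∈ M, ∀ i j, 0 ≤ A i j)
    (hrow : ∀ A ∈ M, ∀ i, ∃ j, 0 < A i j)
    (hcol : ∀ A ∈ M, ∀ j, ∃ i, 0 < A i j)
    (hirr : ¬ ∃ N₁ N₂ : Finset (Fin n), N₁.Nonempty ∧ N₂.Nonempty ∧ Disjoint N₁ N₂ ∧
      N₁ ∪ N₂ = Finset.univ ∧ ∀ A ∈ M, ∀ i ∈ N₁, ∀ j ∈ N₂, A i j = 0)
    (n₁ : ℕ)
    (hmax : ∀ l : List (Matrix (Fin n) (Fin n) ℝ), (∀ P ∈ l, P ∈ M) → l ≠ [] →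
      ∀ i, rowCount l.prod i ≤ n₁ ∧ colCount l.prod i ≤ n₁)
    (hach : ∃ l : List (Matrix (Fin n) (Fin n) ℝ), (∀ P ∈ l, P ∈ M) ∧ l ≠ [] ∧
      ∃ i, rowCount l.prod i = n₁ ∨ colCount l.prod i = n₁) :
    ∃ l : List (Matrix (Fin n) (Fin n) ℝ), (∀ P ∈ l, P ∈ M) ∧ l ≠ [] ∧
      ∃ S : Finset (Fin n), S.card = n₁ ∧
        (∀ i ∈ S, ∀ j ∈ S, 0 < l.prod i j) ∧
        (∀ i j : Fin n, Xor' (i ∈ S) (j ∈ S) → l.prod i j = 0) := by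
  set Q := Subsemigroup.closure (M : Set (Matrix (Fin n) (Fin n) ℝ))
  have hQ₀ : ∀ A ∈ Q, ∀ i j, 0 ≤ A i j := fun A => nonneg_of_mem_closure hpos
  have hreach := exists_mem_closure_apply_pos (coe_nonempty.2 hM) hpos hrow hirr
  -- `rowCount` and `colCount` are the cardinalities of the row supports of `A` and `Aᵀ`.
  have hbound : ∀ A ∈ Q, ∀ i, #(A.rowSupport i) ≤ n₁ ∧ #(Aᵀ.rowSupport i) ≤ n₁ := by
    intro A hA i
    obtain ⟨l, hl, hlM, rfl⟩ := Subsemigroup.mem_closure_iff_exists_list.1 hA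
    exact hmax l hlM hl i
  obtain ⟨B, hBM, hB, i₀, hi₀⟩ := hach
  have hBQ : B.prod ∈ Q := Subsemigroup.mem_closure_iff_exists_list.2 ⟨B, hB, hBM, rfl⟩
  obtain ⟨A, hAQ, T, hT, hTpos⟩ : ∃ A ∈ Q, ∃ T : Finset (Fin n), #T = n₁ ∧
      ∀ i ∈ T, ∀ j ∈ T, 0 < A i j := by
    rcases hi₀ with hi₀ | hi₀
    · exact (exists_forall_apply_pos_of_rowSupport_maximal hQ₀
        (fun A => exists_row_pos_of_mem_closure hpos hrow) hreach hBQ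
        fun A hA i => (hbound A hA i).1.trans_eq hi₀.symm).imp fun A h => ⟨h.1, _, hi₀, h.2⟩
    · exact (exists_forall_apply_pos_of_colSupport_maximal hQ₀
        (fun A => exists_col_pos_of_mem_closure hpos hcol) hreach hBQ
        fun A hA i => (hbound A hA i).2.trans_eq hi₀.symm).imp fun A h => ⟨h.1, _, hi₀, h.2⟩
  obtain ⟨l, hl, hlM, rfl⟩ := Subsemigroup.mem_closure_iff_exists_list.1 hAQ
  exact ⟨l, hlM, hl, T, hT, hTpos, fun i j => apply_eq_zero_of_xor (hQ₀ _ hAQ) hTpos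
    (fun i => hT ▸ (hbound _ hAQ i).1) (fun j => hT ▸ (hbound _ hAQ j).2)⟩
end
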